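/- arXiv:0911.1624 — 4 statements merged into one kernel-verified Lean document; each statement's English description precedes it below -/
import Mathlib

section
/- Let I be a finite index set and let ψ, φ : I → ℂ satisfy Σ_x |ψ(x)|² = 1 and Σ_x |φ(x)|² = 1. Set p(x) = |ψ(x)|² and q(x) = |φ(x)|², and define F(x) = conj(φ(x))·ψ(x)/p(x) if p(x) ≥ q(x) and F(x) = 0 otherwise, and G(x) = conj(φ(x))·ψ(x)/q(x) if p(x) < q(x) and G(x) = 0 otherwise (with the convention 0/0 = 0). Then Σ_x conj(φ(x))·ψ(x) = Σ_x p(x)·F(x) + Σ_x q(x)·G(x), and moreover |F(x)| ≤ 1 and |G(x)| ≤ 1 for every x ∈ I. -/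
/-!
Pointwise, `conj (φ x) * ψ x` is recovered as `p x * F x` or as `q x * G x` according to which of
the two weights is larger, since a vanishing weight forces the product to vanish. The larger
weight dominates `‖φ x‖ * ‖ψ x‖` (it dominates both squares), which bounds `F` and `G` by 1.
-/

section

variable {𝕜 : Type*} [RCLike 𝕜]

theorem eq_mul_ite_div_add_mul_ite_div {c : 𝕜} {p q : ℝ} (hp : p = 0 → c = 0)
    (hq : q = 0 → c = 0) :
    c = (p : 𝕜) * (if q ≤ p then c / p else 0) + (q : 𝕜) * (if p < q then c / q else 0) := by
  rcases le_or_gt q p with h | h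
  · rw [if_pos h, if_neg h.not_gt, mul_zero, add_zero,
      mul_div_cancel_of_imp' fun h0 => hp (RCLike.ofReal_eq_zero.mp h0)]
  · rw [if_neg h.not_ge, if_pos h, mul_zero, zero_add,
      mul_div_cancel_of_imp' fun h0 => hq (RCLike.ofReal_eq_zero.mp h0)]

theorem norm_mul_div_le_one {a b : 𝕜} {r : ℝ} (ha : ‖a‖ ^ 2 ≤ r) (hb : ‖b‖ ^ 2 ≤ r) :
    ‖a * b / (r : 𝕜)‖ ≤ 1 := by
  rw [norm_div, norm_mul, RCLike.norm_ofReal]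
  have hab : ‖a‖ * ‖b‖ ≤ r := by nlinarith [sq_nonneg (‖a‖ - ‖b‖)]
  exact div_le_one_of_le₀ (hab.trans (le_abs_self r)) (abs_nonneg r)

end

theorem overlap_decomposition_general {I : Type*} [Fintype I]
    (ψ φ : I → ℂ)
    (p q : I → ℝ)
    (hp : ∀ x, p x = ‖ψ x‖ ^ 2)
    (hq : ∀ x, q x = ‖φ x‖ ^ 2)
    (F G : I → ℂ)
    (hF : ∀ x, F x = if q x ≤ p x then (starRingEnd ℂ) (φ x) * ψ x / (p x : ℂ) else 0)
    (hG : ∀ x, G x = if p x < q x then (starRingEnd ℂ) (φ x) * ψ x / (q x : ℂ) else 0) :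
    (∑ x, (starRingEnd ℂ) (φ x) * ψ x)
      = ∑ x, (p x : ℂ) * F x + ∑ x, (q x : ℂ) * G x
    ∧ (∀ x, ‖F x‖ ≤ 1) ∧ (∀ x, ‖G x‖ ≤ 1) := by
  refine ⟨?_, fun x => ?_, fun x => ?_⟩
  · rw [← Finset.sum_add_distrib]
    refine Finset.sum_congr rfl fun x _ => ?_
    rw [hF, hG]
    exact eq_mul_ite_div_add_mul_ite_div (by simp_all) (by simp_all)
  · rw [hF]
    split_ifs with h
    · exact norm_mul_div_le_one (by rwa [Complex.norm_conj, ← hq]) (hp x).ge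
    · simp
  · rw [hG]
    split_ifs with h
    · exact norm_mul_div_le_one (by rw [Complex.norm_conj, hq]) (by rw [← hp]; exact h.le)
    · simp

/-- Overlap decomposition for sampling-based estimation of ⟨φ|ψ⟩ (paper's Lemma 4). -/
theorem overlap_decomposition {I : Type*} [Fintype I]
    (ψ φ : I → ℂ)
    (hψ : ∑ x, ‖ψ x‖ ^ 2 = 1)
    (hφ : ∑ x, ‖φ x‖ ^ 2 = 1)
    (p q : I → ℝ)
    (hp : ∀ x, p x = ‖ψ x‖ ^ 2)
    (hq : ∀ x, q x = ‖φ x‖ ^ 2)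
    (F G : I → ℂ)
    (hF : ∀ x, F x = if q x ≤ p x then (starRingEnd ℂ) (φ x) * ψ x / (p x : ℂ) else 0)
    (hG : ∀ x, G x = if p x < q x then (starRingEnd ℂ) (φ x) * ψ x / (q x : ℂ) else 0) :
    (∑ x, (starRingEnd ℂ) (φ x) * ψ x)
      = ∑ x, (p x : ℂ) * F x + ∑ x, (q x : ℂ) * G x
    ∧ (∀ x, ‖F x‖ ≤ 1) ∧ (∀ x, ‖G x‖ ≤ 1) :=
  overlap_decomposition_general ψ φ p q hp hq F G hF hG
end

section
/- Let I be a finite index set, let s ∈ ℕ, and let A be an I×I complex matrix whose ℓ²→ℓ² operator norm satisfies ‖A‖ ≤ 1 and such that every row and every column of A contains at most s nonzero entries. Let ψ, φ : I → ℂ be unit vectors (Σ|ψ(x)|² = 1 = Σ|φ(y)|²), and set p(x) = |ψ(x)|², q(y) = |φ(y)|². Define F(x) = (ψ(x)/p(x)) · Σ_{y : p(x) ≥ q(y)} conj(φ(y))·A(y,x) and G(y) = (conj(φ(y))/q(y)) · Σ_{x : p(x) < q(y)} A(y,x)·ψ(x), with the convention 0/0 = 0. Then ⟨φ, Aψ⟩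 := Σ_{y,x} conj(φ(y))·A(y,x)·ψ(x) = Σ_x p(x)·F(x) + Σ_y q(y)·G(y), and |F(x)| ≤ s and |G(y)| ≤ s for all x, y ∈ I. -/
/-!
Split every term `conj (φ y) * A y x * ψ x` of the double sum according to whether
`q y ≤ p x`: the terms with `q y ≤ p x` add up to `∑ x, p x * F x` and the others to
`∑ y, q y * G y`. In the sum defining `F x` only the at most `s` entries of column `x` with
`A y x ≠ 0` contribute, each of modulus at most `|φ y| ≤ |ψ x|` since `|A y x| ≤ ‖A‖ ≤ 1`;
dividing `|ψ x| · s|ψ x|` by `p x = |ψ x|²` gives `|F x| ≤ s`. The bound on `G` is symmetric,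
using rows.
-/

open scoped InnerProductSpace ComplexConjugate

theorem Matrix.norm_entry_le_norm_toEuclideanCLM {n 𝕜 : Type*} [RCLike 𝕜] [Fintype n]
    [DecidableEq n] (A : Matrix n n 𝕜) (i j : n) :
    ‖A i j‖ ≤ ‖Matrix.toEuclideanCLM (𝕜 := 𝕜) A‖ := by
  set T := Matrix.toEuclideanCLM (𝕜 := 𝕜) A
  have hT : ⟪EuclideanSpace.single i 1, T (EuclideanSpace.single j 1)⟫_𝕜 = A i j := by
    simp [T, EuclideanSpace.inner_single_left, Matrix.ofLp_toEuclideanCLM, Matrix.mulVec_single]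
  calc ‖A i j‖ ≤ ‖EuclideanSpace.single i (1 : 𝕜)‖ * ‖T (EuclideanSpace.single j 1)‖ :=
        hT ▸ norm_inner_le_norm _ _
    _ ≤ 1 * (‖T‖ * ‖EuclideanSpace.single j (1 : 𝕜)‖) := by
        rw [PiLp.norm_single, norm_one]
        gcongr
        exact T.le_opNorm _
    _ = ‖T‖ := by simp

theorem norm_sum_le_of_support_subset {ι E : Type*} [Fintype ι] [SeminormedAddCommGroup E]
    {f : ι → E} {S : Set ι} {s : ℕ} {c : ℝ} (hS : S.ncard ≤ s) (hfS : Function.support f ⊆ S)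
    (hf : ∀ i, ‖f i‖ ≤ c) (hc : 0 ≤ c) :
    ‖∑ i, f i‖ ≤ s * c := by
  classical
  calc ‖∑ i, f i‖ = ‖∑ i ∈ S.toFinset, f i‖ := by
        refine congrArg _ (Finset.sum_subset (Finset.subset_univ _) fun i _ hi => ?_).symm
        exact Function.notMem_support.mp fun h => hi (Set.mem_toFinset.mpr (hfS h))
    _ ≤ ∑ i ∈ S.toFinset, ‖f i‖ := norm_sum_le _ _
    _ ≤ S.toFinset.card • c := Finset.sum_le_card_nsmul _ _ _ fun i _ => hf i
    _ ≤ s * c := by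
        rw [nsmul_eq_mul, ← Set.ncard_eq_toFinset_card']
        gcongr

theorem mul_div_mul_cancel_of_imp {K : Type*} [Field K] {d z : K} (w : K) (h : d = 0 → z = 0) :
    d * (z / d * w) = z * w := by
  rw [← mul_assoc, mul_div_assoc', mul_div_cancel_left_of_imp h]

theorem norm_div_norm_sq_mul_le {𝕜 : Type*} [RCLike 𝕜] {z w : 𝕜} {d c : ℝ} (hd : d = ‖z‖ ^ 2)
    (hc : 0 ≤ c) (hw : ‖w‖ ≤ c * ‖z‖) :
    ‖z / (d : 𝕜) * w‖ ≤ c := by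
  rcases eq_or_ne z 0 with rfl | hz
  · simpa using hc
  have hz' : 0 < ‖z‖ := norm_pos_iff.mpr hz
  calc ‖z / (d : 𝕜) * w‖ = ‖w‖ / ‖z‖ := by
        rw [norm_mul, norm_div, RCLike.norm_ofReal, hd, abs_of_nonneg (by positivity)]
        field_simp
    _ ≤ c := (div_le_iff₀ hz').mpr hw

theorem Finset.sum_sum_eq_sum_sum_ite_add {ι κ M : Type*} [Fintype ι] [Fintype κ]
    [AddCommMonoid M] (f : ι → κ → M) (P : ι → κ → Prop) [∀ i j, Decidable (P i j)] :
    ∑ i, ∑ j, f i j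
      = ∑ j, ∑ i, (if P i j then f i j else 0) + ∑ i, ∑ j, (if ¬P i j then f i j else 0) := by
  rw [Finset.sum_comm (f := fun j i => if P i j then f i j else 0), ← Finset.sum_add_distrib]
  refine Finset.sum_congr rfl fun i _ => ?_
  rw [← Finset.sum_add_distrib]
  exact Finset.sum_congr rfl fun j _ => by split_ifs <;> simp

theorem sparse_matrix_element_decomposition_general {I : Type*} [Fintype I] [DecidableEq I]
    (s : ℕ) (A : Matrix I I ℂ)
    (hA : ‖Matrix.toEuclideanCLM (𝕜 := ℂ) A‖ ≤ 1)
    (hrow : ∀ y, {x | A y x ≠ 0}.ncard ≤ s)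
    (hcol : ∀ x, {y | A y x ≠ 0}.ncard ≤ s)
    (ψ φ : I → ℂ)
    (p q : I → ℝ)
    (hp : ∀ x, p x = ‖ψ x‖ ^ 2)
    (hq : ∀ y, q y = ‖φ y‖ ^ 2)
    (F G : I → ℂ)
    (hF : ∀ x, F x = ψ x / (p x : ℂ) * ∑ y, (if q y ≤ p x then (starRingEnd ℂ) (φ y) * A y x else 0))
    (hG : ∀ y, G y = (starRingEnd ℂ) (φ y) / (q y : ℂ) * ∑ x, (if p x < q y then A y x * ψ x else 0)) :
    (∑ y, ∑ x, (starRingEnd ℂ) (φ y) * A y x * ψ x)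
      = ∑ x, (p x : ℂ) * F x + ∑ y, (q y : ℂ) * G y
    ∧ (∀ x, ‖F x‖ ≤ s) ∧ (∀ y, ‖G y‖ ≤ s) := by
  have hentry y x : ‖A y x‖ ≤ 1 := (A.norm_entry_le_norm_toEuclideanCLM y x).trans hA
  have hφ_le_ψ x y (h : q y ≤ p x) : ‖conj (φ y)‖ ≤ ‖ψ x‖ := by
    simpa [hp, hq, sq_le_sq₀] using h
  have hψ_le_φ x y (h : p x < q y) : ‖ψ x‖ ≤ ‖φ y‖ := by
    simpa [hp, hq, sq_le_sq₀] using h.le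
  have hpF x : (p x : ℂ) * F x = ∑ y, if q y ≤ p x then conj (φ y) * A y x * ψ x else 0 := by
    rw [hF, mul_div_mul_cancel_of_imp _ (by simp [hp]), Finset.mul_sum]
    congr! 1 with y
    split_ifs <;> ring
  have hqG y : (q y : ℂ) * G y = ∑ x, if ¬q y ≤ p x then conj (φ y) * A y x * ψ x else 0 := by
    rw [hG, mul_div_mul_cancel_of_imp _ (by simp [hq]), Finset.mul_sum]
    congr! 1 with x
    simp only [not_le]
    split_ifs <;> ring
  refine ⟨?_, fun x => ?_, fun y => ?_⟩
  · simp only [hpF, hqG]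
    exact Finset.sum_sum_eq_sum_sum_ite_add _ _
  · rw [hF]
    refine norm_div_norm_sq_mul_le (hp x) s.cast_nonneg
      (norm_sum_le_of_support_subset (hcol x) (fun y hy h => hy (by simp [h])) (fun y => ?_)
        (norm_nonneg _))
    split_ifs with h
    · simpa using mul_le_mul (hφ_le_ψ x y h) (hentry y x) (norm_nonneg _) (norm_nonneg _)
    · simp
  · rw [hG]
    refine norm_div_norm_sq_mul_le (by rw [hq, Complex.norm_conj]) s.cast_nonneg
      (norm_sum_le_of_support_subset (hrow y) (fun x hx h => hx (by simp [h])) (fun x => ?_)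
        (norm_nonneg _))
    split_ifs with h
    · simpa using mul_le_mul (hentry y x) (hψ_le_φ x y h) (norm_nonneg _) zero_le_one
    · simp

/-- Decomposition of a matrix element ⟨φ|A|ψ⟩ of a sparse operator between unit vectors
as a sum of two expectation values of functions bounded by the sparseness s
(core of the paper's Theorem 3). -/
theorem sparse_matrix_element_decomposition {I : Type*} [Fintype I] [DecidableEq I]
    (s : ℕ) (A : Matrix I I ℂ)
    (hA : ‖Matrix.toEuclideanCLM (𝕜 := ℂ) A‖ ≤ 1)
    (hrow : ∀ y, {x | A y x ≠ 0}.ncard ≤ s)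
    (hcol : ∀ x, {y | A y x ≠ 0}.ncard ≤ s)
    (ψ φ : I → ℂ)
    (hψ : ∑ x, ‖ψ x‖ ^ 2 = 1)
    (hφ : ∑ y, ‖φ y‖ ^ 2 = 1)
    (p q : I → ℝ)
    (hp : ∀ x, p x = ‖ψ x‖ ^ 2)
    (hq : ∀ y, q y = ‖φ y‖ ^ 2)
    (F G : I → ℂ)
    (hF : ∀ x, F x = ψ x / (p x : ℂ) * ∑ y, (if q y ≤ p x then (starRingEnd ℂ) (φ y) * A y x else 0))
    (hG : ∀ y, G y = (starRingEnd ℂ) (φ y) / (q y : ℂ) * ∑ x, (if p x < q y then A y x * ψ x else 0)) :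
    (∑ y, ∑ x, (starRingEnd ℂ) (φ y) * A y x * ψ x)
      = ∑ x, (p x : ℂ) * F x + ∑ y, (q y : ℂ) * G y
    ∧ (∀ x, ‖F x‖ ≤ s) ∧ (∀ y, ‖G y‖ ≤ s) :=
  sparse_matrix_element_decomposition_general s A hA hrow hcol ψ φ p q hp hq F G hF hG
end

section
/- Fix m ∈ ℕ, a Boolean function g : ((Fin m) → ZMod 2) → ZMod 2 with at most s nonzero Fourier coefficients, and θ > 0. Let W_g(u,v) = 2^{−m}·ĝ(u+v), and let W^θ be the matrix obtained by replacing every entry of W_g of absolute value strictly smaller than θ by zero (W^θ(u,v) = W_g(u,v) if |W_g(u,v)| ≥ θ, and 0 otherwise). Then both W^θ and W_g − W^θ have at most s nonzero entries in every row and every column, every entry of W_g − W^θ has absolute value strictly smaller than θ, and the ℓ²→ℓ² operator norm satisfies ‖W_g − W^θ‖ ≤ s·θ. -/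
/-- `(−1)^b` for `b : ZMod 2`, as a complex number. -/
noncomputable def negOnePow (b : ZMod 2) : ℂ := if b = 0 then 1 else -1

/-- Mod-2 inner product of two bit strings. -/
def dotp {m : ℕ} (u x : Fin m → ZMod 2) : ZMod 2 := ∑ i, u i * x i

/-- The Fourier coefficient `ĝ(w) = Σ_x (−1)^{⟨w,x⟩ + g(x)}` of a Boolean function. -/
noncomputable def boolFourier {m : ℕ} (g : (Fin m → ZMod 2) → ZMod 2)
    (w : Fin m → ZMod 2) : ℂ :=
  ∑ x, negOnePow (dotp w x + g x)

/-!
`W_g` is a convolution-type matrix: its `(u, v)` entry depends only on `u + v` and vanishes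
unless `ĝ(u + v) ≠ 0`. Hence every row and column of `W_g`, and of anything obtained from it by
zeroing entries, has at most `s` nonzero entries. The entries of `W_g − W^θ` lie below `θ`, so its
absolute row and column sums are at most `s·θ`, and the Schur test bounds its ℓ² operator norm by
the geometric mean of these two bounds.
-/

open Finset

section SchurTest

open Matrix

variable {𝕜 : Type*} [RCLike 𝕜] {m n : Type*} [Fintype n]

/-- Cauchy–Schwarz with the weights `‖A u v‖`. -/
lemma norm_mulVec_apply_sq_le (A : Matrix m n 𝕜) (x : n → 𝕜) (u : m) :
    ‖(A *ᵥ x) u‖ ^ 2 ≤ (∑ v, ‖A u v‖) * ∑ v, ‖A u v‖ * ‖x v‖ ^ 2 := by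
  have h_triangle : ‖(A *ᵥ x) u‖ ≤ ∑ v, ‖A u v‖ * ‖x v‖ :=
    (norm_sum_le _ _).trans_eq (by simp only [norm_mul])
  calc ‖(A *ᵥ x) u‖ ^ 2 ≤ (∑ v, ‖A u v‖ * ‖x v‖) ^ 2 := by gcongr
    _ ≤ (∑ v, ‖A u v‖) * ∑ v, ‖A u v‖ * ‖x v‖ ^ 2 :=
      sum_sq_le_sum_mul_sum_of_sq_le_mul _ (fun _ _ => norm_nonneg _)
        (fun _ _ => by positivity) (fun _ _ => le_of_eq (by ring))

lemma sum_norm_mulVec_sq_le [Fintype m] {A : Matrix m n 𝕜} {R C : ℝ} (hR : 0 ≤ R)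
    (hrow : ∀ u, ∑ v, ‖A u v‖ ≤ R) (hcol : ∀ v, ∑ u, ‖A u v‖ ≤ C) (x : n → 𝕜) :
    ∑ u, ‖(A *ᵥ x) u‖ ^ 2 ≤ R * C * ∑ v, ‖x v‖ ^ 2 :=
  calc ∑ u, ‖(A *ᵥ x) u‖ ^ 2 ≤ ∑ u, R * ∑ v, ‖A u v‖ * ‖x v‖ ^ 2 := by
        gcongr with u
        exact (norm_mulVec_apply_sq_le A x u).trans
          (mul_le_mul_of_nonneg_right (hrow u) (by positivity))
    _ = R * ∑ v, (∑ u, ‖A u v‖) * ‖x v‖ ^ 2 := by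
        rw [← mul_sum, sum_comm]
        simp only [sum_mul]
    _ ≤ R * ∑ v, C * ‖x v‖ ^ 2 := by gcongr with v; exact hcol v
    _ = R * C * ∑ v, ‖x v‖ ^ 2 := by rw [← mul_sum, mul_assoc]

/-- The Schur test. -/
theorem norm_toEuclideanCLM_le_sqrt_of_sum_norm_le [DecidableEq n] {A : Matrix n n 𝕜} {R C : ℝ}
    (hR : 0 ≤ R) (hrow : ∀ u, ∑ v, ‖A u v‖ ≤ R) (hcol : ∀ v, ∑ u, ‖A u v‖ ≤ C) :
    ‖Matrix.toEuclideanCLM (𝕜 := 𝕜) A‖ ≤ √(R * C) := by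
  refine ContinuousLinearMap.opNorm_le_bound _ (Real.sqrt_nonneg _) fun x => ?_
  rw [EuclideanSpace.norm_eq, EuclideanSpace.norm_eq, ← Real.sqrt_mul' _ (by positivity)]
  exact Real.sqrt_le_sqrt (sum_norm_mulVec_sq_le hR hrow hcol x)

end SchurTest

lemma sum_norm_le_of_ncard_support_le {ι E : Type*} [Fintype ι] [SeminormedAddCommGroup E]
    {f : ι → E} {s : ℕ} {θ : ℝ} (hθ : 0 ≤ θ) (hs : (Function.support f).ncard ≤ s)
    (hf : ∀ i, ‖f i‖ ≤ θ) :
    ∑ i, ‖f i‖ ≤ s * θ := by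
  classical
  calc ∑ i, ‖f i‖ = ∑ i ∈ (Function.support f).toFinset, ‖f i‖ :=
        (sum_subset (subset_univ _) fun i _ hi => by simp_all).symm
    _ ≤ (Function.support f).toFinset.card • θ := sum_le_card_nsmul _ _ _ fun i _ => hf i
    _ ≤ s * θ := by
        rw [nsmul_eq_mul, ← Set.ncard_eq_toFinset_card']
        gcongr

section TranslationSupport

variable {G α : Type*} [AddGroup G] [Zero α] {A : Matrix G G α} {S : Set G}

lemma ncard_row_support_le_of_add_mem (hS : S.Finite) (hA : ∀ u v, A u v ≠ 0 → u + v ∈ S)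
    (u : G) : {v | A u v ≠ 0}.ncard ≤ S.ncard := by
  have hsub : {v | A u v ≠ 0} ⊆ (-u + ·) '' S := fun v hv =>
    ⟨u + v, hA u v hv, neg_add_cancel_left u v⟩
  exact (Set.ncard_le_ncard hsub (hS.image _)).trans (Set.ncard_image_le hS)

lemma ncard_col_support_le_of_add_mem (hS : S.Finite) (hA : ∀ u v, A u v ≠ 0 → u + v ∈ S)
    (v : G) : {u | A u v ≠ 0}.ncard ≤ S.ncard := by
  have hsub : {u | A u v ≠ 0} ⊆ (· - v) '' S := fun u hu =>
    ⟨u + v, hA u v hu, add_sub_cancel_right u v⟩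
  exact (Set.ncard_le_ncard hsub (hS.image _)).trans (Set.ncard_image_le hS)

end TranslationSupport

/-- For a Boolean function `g` with at most `s` nonzero Fourier coefficients, the entrywise
`θ`-truncation `W^θ` of `W_g` and the difference `W_g − W^θ` are both `s`-sparse in every
row and column, the difference has entries of absolute value `< θ`, and the difference has
ℓ²→ℓ² operator norm at most `s·θ` (core of the paper's Lemma 6). -/
theorem truncation_of_sparse_Wg (m s : ℕ) (g : (Fin m → ZMod 2) → ZMod 2)
    (hs : {w | boolFourier g w ≠ 0}.ncard ≤ s)
    (θ : ℝ) (hθ : 0 < θ)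
    (W Wθ : Matrix (Fin m → ZMod 2) (Fin m → ZMod 2) ℂ)
    (hW : ∀ u v, W u v = ((2 : ℂ) ^ m)⁻¹ * boolFourier g (u + v))
    (hWθ : ∀ u v, Wθ u v = if θ ≤ ‖W u v‖ then W u v else 0) :
    (∀ u, {v | Wθ u v ≠ 0}.ncard ≤ s) ∧ (∀ v, {u | Wθ u v ≠ 0}.ncard ≤ s) ∧
    (∀ u, {v | (W - Wθ) u v ≠ 0}.ncard ≤ s) ∧ (∀ v, {u | (W - Wθ) u v ≠ 0}.ncard ≤ s) ∧
    (∀ u v, ‖(W - Wθ) u v‖ < θ) ∧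
    ‖Matrix.toEuclideanCLM (𝕜 := ℂ) (W - Wθ)‖ ≤ s * θ := by
  set S := {w | boolFourier g w ≠ 0}
  have hS : S.Finite := S.toFinite
  have hW_supp : ∀ u v, W u v ≠ 0 → u + v ∈ S := fun u v hne hF =>
    hne (by rw [hW, hF, mul_zero])
  have hWθ_supp : ∀ u v, Wθ u v ≠ 0 → u + v ∈ S := fun u v hne =>
    hW_supp u v fun h0 => hne (by simp [hWθ, h0])
  have hD_supp : ∀ u v, (W - Wθ) u v ≠ 0 → u + v ∈ S := fun u v hne =>
    hW_supp u v fun h0 => hne (by simp [hWθ, h0])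
  have hD_small : ∀ u v, ‖(W - Wθ) u v‖ < θ := by
    intro u v
    rw [Matrix.sub_apply, hWθ]
    split_ifs with h
    · simpa using hθ
    · simpa using not_le.mp h
  have hD_row u := (ncard_row_support_le_of_add_mem hS hD_supp u).trans hs
  have hD_col v := (ncard_col_support_le_of_add_mem hS hD_supp v).trans hs
  refine ⟨fun u => (ncard_row_support_le_of_add_mem hS hWθ_supp u).trans hs,
    fun v => (ncard_col_support_le_of_add_mem hS hWθ_supp v).trans hs, hD_row, hD_col,
    hD_small, ?_⟩
  have hsθ : (0 : ℝ) ≤ s * θ := by positivity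
  calc ‖Matrix.toEuclideanCLM (𝕜 := ℂ) (W - Wθ)‖ ≤ √(s * θ * (s * θ)) :=
        norm_toEuclideanCLM_le_sqrt_of_sum_norm_le hsθ
          (fun u => sum_norm_le_of_ncard_support_le hθ.le (hD_row u) fun v => (hD_small u v).le)
          (fun v => sum_norm_le_of_ncard_support_le hθ.le (hD_col v) fun u => (hD_small u v).le)
    _ = s * θ := Real.sqrt_mul_self hsθ
end

section
/- Let α and β be finite index sets. Let ξ, χ : α → ℂ, let ψ, φ : α × β → ℂ, and let A and B be (α×β)×(α×β) complex matrices. Let P = |ξ⟩⟨χ| ⊗ I_β denote the matrix with entries P((a,c),(b,c')) = ξ(a)·conj(χ(b)) if c = c' and 0 otherwise, and let U_SWAP be the linear map on ℂ^{α × (α×β)} defined by (U_SWAP·w)(b,(a,c)) = w(a,(b,c)). Then ⟨φ, A·P·B·ψ⟩ = ⟨χ ⊗ φ, (I_α ⊗ A)·U_SWAP·(I_α ⊗ B)·(ξ ⊗ ψ)⟩, where for vectors (χ ⊗ φ)(b,(a,c)) = χ(b)·φ(a,c) and (ξ ⊗ ψ)(b,(a,c)) = ξ(b)·ψ(a,c),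 (I_α ⊗ A) acts as A on the second factor, and ⟨·,·⟩ is the standard inner product (conjugate-linear in the first argument). -/
open Kronecker

/-- The SWAP-test identity expressing the partial matrix element
`⟨φ| A (|ξ⟩⟨χ| ⊗ I) B |ψ⟩` as an ordinary matrix element of
`(I ⊗ A)·U_SWAP·(I ⊗ B)` between tensor-product vectors (proof of the paper's Corollary 2). -/
theorem swap_test_identity {α β : Type*} [Fintype α] [Fintype β]
    [DecidableEq α] [DecidableEq β]
    (ξ χ : α → ℂ) (ψ φ : α × β → ℂ)
    (A B : Matrix (α × β) (α × β) ℂ)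
    (P : Matrix (α × β) (α × β) ℂ)
    (hP : ∀ a b c c', P (a, c) (b, c') = if c = c' then ξ a * (starRingEnd ℂ) (χ b) else 0)
    (US : Matrix (α × (α × β)) (α × (α × β)) ℂ)
    (hU : ∀ w : α × (α × β) → ℂ, ∀ b a c, US.mulVec w (b, (a, c)) = w (a, (b, c))) :
    ∑ j, (starRingEnd ℂ) (φ j) * (A * P * B).mulVec ψ j
      = ∑ k : α × (α × β), (starRingEnd ℂ) (χ k.1 * φ k.2) *
          ((((1 : Matrix α α ℂ) ⊗ₖ A) * US * ((1 : Matrix α α ℂ) ⊗ₖ B)).mulVec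
            (fun k' : α × (α × β) => ξ k'.1 * ψ k'.2)) k := by
  have h1 : ((1 : Matrix α α ℂ) ⊗ₖ B).mulVec (fun k' : α × (α × β) => ξ k'.1 * ψ k'.2)
      = fun k : α × (α × β) => ξ k.1 * B.mulVec ψ k.2 := by
    funext ⟨a, bc⟩
    simp [Matrix.mulVec, dotProduct, Fintype.sum_prod_type, Matrix.one_apply,
      ite_mul, Finset.mul_sum, mul_comm, mul_left_comm]
  have h2 : US.mulVec (fun k : α × (α × β) => ξ k.1 * B.mulVec ψ k.2)
      = fun k : α × (α × β) => ξ k.2.1 * B.mulVec ψ (k.1, k.2.2) := by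
    funext ⟨b, a, c⟩
    exact hU _ b a c
  have h3 : (((1 : Matrix α α ℂ) ⊗ₖ A).mulVec
        (fun k : α × (α × β) => ξ k.2.1 * B.mulVec ψ (k.1, k.2.2)))
      = fun k : α × (α × β) => ∑ j : α × β, A k.2 j * (ξ j.1 * B.mulVec ψ (k.1, j.2)) := by
    funext ⟨b, a, c⟩
    simp [Matrix.mulVec, dotProduct, Fintype.sum_prod_type, Matrix.one_apply,
      ite_mul, mul_comm, mul_left_comm]
  have hPv : P.mulVec (B.mulVec ψ)
      = fun j : α × β => ξ j.1 * ∑ b, (starRingEnd ℂ) (χ b) * B.mulVec ψ (b, j.2) := by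
    funext ⟨a, c⟩
    simp [Matrix.mulVec, dotProduct, Fintype.sum_prod_type, hP,
      Finset.mul_sum, mul_comm, mul_left_comm]
  conv_rhs => rw [← Matrix.mulVec_mulVec, ← Matrix.mulVec_mulVec, h1, h2, h3]
  conv_lhs => rw [← Matrix.mulVec_mulVec, ← Matrix.mulVec_mulVec, hPv]
  set g := B.mulVec ψ with hg
  -- expand A.mulVec on the left, split the product sum on the right
  simp only [Matrix.mulVec, dotProduct, map_mul]
  simp only [Finset.mul_sum]
  conv_rhs => rw [Fintype.sum_prod_type]
  refine (Finset.sum_congr rfl fun x _ => Finset.sum_comm).trans ?_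
  rw [Finset.sum_comm]
  refine Finset.sum_congr rfl fun b _ => ?_
  refine Finset.sum_congr rfl fun x _ => ?_
  refine Finset.sum_congr rfl fun j _ => ?_
  ring
end
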